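/- Let F : ℝⁿ → ℝᵐ satisfy the local tangential cone condition with constant η ∈ [0, 1/2), and suppose x⋆ ∈ ℝⁿ satisfies F(x⋆) = 0. Let I ⊆ {1,…,m} be a nonempty index subset, let x_k ∈ ℝⁿ be such that F'_I(x_k) has full column rank, let α ∈ [1, 2(1−η)), and define x_{k+1} = x_k − α (F'_I(x_k))ᵀ F_I(x_k) / ‖F'_I(x_k)‖₂². Then ‖x_{k+1} − x⋆‖₂² ≤ (1 − (2(1−η)α − α²) / ((1+η²) κ_F²(F'_I(x_k)))) ‖x_k − x⋆‖₂², where κ_F(A) = ‖A‖_F / σ_min(A). -/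

import Mathlib

open Matrix

/-- The singular values of a real matrix `A`: square roots of the eigenvalues of `AᵀA`. -/
noncomputable def singVals {m' : Type*} [Fintype m'] {n : ℕ}
    (A : Matrix m' (Fin n) ℝ) : Fin n → ℝ :=
  fun j => Real.sqrt ((Matrix.isHermitian_conjTranspose_mul_self A).eigenvalues j)

/-- The largest singular value of `A`, i.e. its spectral norm `‖A‖₂`. -/
noncomputable def sigmaMax {m' : Type*} [Fintype m'] {n : ℕ}
    (A : Matrix m' (Fin n) ℝ) : ℝ :=
  ⨆ j, singVals A j

/-- The smallest singular value of `A`. -/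
noncomputable def sigmaMin {m' : Type*} [Fintype m'] {n : ℕ}
    (A : Matrix m' (Fin n) ℝ) : ℝ :=
  ⨅ j, singVals A j

/-- The Frobenius norm of `A`. -/
noncomputable def frobNorm {m' : Type*} [Fintype m'] {n : ℕ}
    (A : Matrix m' (Fin n) ℝ) : ℝ :=
  Real.sqrt (∑ i, ∑ j, (A i j) ^ 2)

/-- The scaled condition number `κ_F(A) = ‖A‖_F / σ_min(A)`. -/
noncomputable def kappaF {m' : Type*} [Fintype m'] {n : ℕ}
    (A : Matrix m' (Fin n) ℝ) : ℝ :=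
  frobNorm A / sigmaMin A

/-!
Write `e = x_k - x⋆`, `r = F_I(x_k)` and `J = F'_I(x_k)`. As `F(x⋆) = 0`, the tangential cone
condition at `(x_k, x⋆)` reads `|r_i - (J e)_i| ≤ η |r_i|`, and a scalar estimate summed over `I`
turns it into `(2(1-η)α - α²) ‖J e‖² ≤ (1 + η²) (2α ⟪r, J e⟫ - α² ‖r‖²)`. Expanding the square of
`e - α Jᵀ r / ‖J‖₂²` with `‖Jᵀ r‖ ≤ ‖J‖₂ ‖r‖` shows that the step lowers `‖e‖²` by at least
`(2α ⟪r, J e⟫ - α² ‖r‖²) / ‖J‖₂²`; the bounds `σ_min ‖e‖ ≤ ‖J e‖` and `‖J‖₂ ≤ ‖J‖_F`, read off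
the spectral decomposition of `JᵀJ`, finish the estimate.
-/

open scoped RealInnerProductSpace

namespace Matrix

lemma IsHermitian.toEuclideanLin_eigenvectorBasis {𝕜 ι : Type*} [RCLike 𝕜] [Fintype ι]
    [DecidableEq ι] {M : Matrix ι ι 𝕜} (hM : M.IsHermitian) (j : ι) :
    toEuclideanLin M (hM.eigenvectorBasis j) = hM.eigenvalues j • hM.eigenvectorBasis j := by
  ext1
  simp [hM.mulVec_eigenvectorBasis]

lemma IsHermitian.inner_toEuclideanLin_self {ι : Type*} [Fintype ι] [DecidableEq ι]
    {M : Matrix ι ι ℝ} (hM : M.IsHermitian) (x : EuclideanSpace ℝ ι) :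
    ⟪x, toEuclideanLin M x⟫ = ∑ j, hM.eigenvalues j * ⟪hM.eigenvectorBasis j, x⟫ ^ 2 := by
  have hsymm : (toEuclideanLin M).IsSymmetric := isSymmetric_toEuclideanLin_iff.mpr hM
  rw [← hM.eigenvectorBasis.sum_inner_mul_inner]
  refine Finset.sum_congr rfl fun j _ => ?_
  rw [← hsymm, hM.toEuclideanLin_eigenvectorBasis, real_inner_smul_left, real_inner_comm]
  ring

end Matrix

section SingularValues

variable {ι : Type*} [Fintype ι] {n : ℕ} (A : Matrix ι (Fin n) ℝ)

lemma sq_singVals (j : Fin n) :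
    singVals A j ^ 2 = (isHermitian_conjTranspose_mul_self A).eigenvalues j :=
  Real.sq_sqrt (eigenvalues_conjTranspose_mul_self_nonneg A j)

lemma sigmaMin_nonneg : 0 ≤ sigmaMin A :=
  Real.iInf_nonneg fun _ => Real.sqrt_nonneg _

lemma sigmaMax_nonneg : 0 ≤ sigmaMax A :=
  Real.iSup_nonneg fun _ => Real.sqrt_nonneg _

lemma sigmaMin_le_singVals (j : Fin n) : sigmaMin A ≤ singVals A j :=
  ciInf_le (Set.finite_range _).bddBelow j

lemma singVals_le_sigmaMax (j : Fin n) : singVals A j ≤ sigmaMax A :=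
  le_ciSup (Set.finite_range _).bddAbove j

lemma sigmaMin_le_sigmaMax : sigmaMin A ≤ sigmaMax A := by
  cases n with
  | zero => simp [sigmaMin, sigmaMax, Real.iInf_of_isEmpty, Real.iSup_of_isEmpty]
  | succ _ => exact (sigmaMin_le_singVals A 0).trans (singVals_le_sigmaMax A 0)

lemma sq_sigmaMin_le_eigenvalues (j : Fin n) :
    sigmaMin A ^ 2 ≤ (isHermitian_conjTranspose_mul_self A).eigenvalues j := by
  rw [← sq_singVals]
  exact pow_le_pow_left₀ (sigmaMin_nonneg A) (sigmaMin_le_singVals A j) 2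

lemma eigenvalues_le_sq_sigmaMax (j : Fin n) :
    (isHermitian_conjTranspose_mul_self A).eigenvalues j ≤ sigmaMax A ^ 2 := by
  rw [← sq_singVals]
  exact pow_le_pow_left₀ (Real.sqrt_nonneg _) (singVals_le_sigmaMax A j) 2

lemma sum_eigenvalues_conjTranspose_mul_self :
    ∑ j, (isHermitian_conjTranspose_mul_self A).eigenvalues j = ∑ i, ∑ j, A i j ^ 2 := by
  have h := (isHermitian_conjTranspose_mul_self A).trace_eq_sum_eigenvalues
  simp only [RCLike.ofReal_real_eq_id, id] at h
  rw [← h, trace, Finset.sum_comm]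
  simp [mul_apply, sq]

lemma sigmaMax_le_frobNorm : sigmaMax A ≤ frobNorm A := by
  refine Real.iSup_le (fun j => Real.sqrt_le_sqrt ?_) (Real.sqrt_nonneg _)
  rw [← sum_eigenvalues_conjTranspose_mul_self]
  exact Finset.single_le_sum (fun j _ => eigenvalues_conjTranspose_mul_self_nonneg A j)
    (Finset.mem_univ j)

variable [DecidableEq ι]

lemma norm_toEuclideanLin_sq (x : EuclideanSpace ℝ (Fin n)) :
    ‖toEuclideanLin A x‖ ^ 2 = ∑ j, (isHermitian_conjTranspose_mul_self A).eigenvalues j *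
      ⟪(isHermitian_conjTranspose_mul_self A).eigenvectorBasis j, x⟫ ^ 2 := by
  rw [← (isHermitian_conjTranspose_mul_self A).inner_toEuclideanLin_self,
    ← real_inner_self_eq_norm_sq, ← LinearMap.adjoint_inner_right,
    ← toEuclideanLin_conjTranspose_eq_adjoint]
  congr 1
  ext1
  simp [mulVec_mulVec]

lemma sq_sigmaMin_mul_sq_norm_le (x : EuclideanSpace ℝ (Fin n)) :
    sigmaMin A ^ 2 * ‖x‖ ^ 2 ≤ ‖toEuclideanLin A x‖ ^ 2 := by
  rw [norm_toEuclideanLin_sq,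
    ← (isHermitian_conjTranspose_mul_self A).eigenvectorBasis.sum_sq_inner_right x, Finset.mul_sum]
  exact Finset.sum_le_sum fun j _ =>
    mul_le_mul_of_nonneg_right (sq_sigmaMin_le_eigenvalues A j) (sq_nonneg _)

lemma sq_norm_toEuclideanLin_le (x : EuclideanSpace ℝ (Fin n)) :
    ‖toEuclideanLin A x‖ ^ 2 ≤ sigmaMax A ^ 2 * ‖x‖ ^ 2 := by
  rw [norm_toEuclideanLin_sq,
    ← (isHermitian_conjTranspose_mul_self A).eigenvectorBasis.sum_sq_inner_right x, Finset.mul_sum]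
  exact Finset.sum_le_sum fun j _ =>
    mul_le_mul_of_nonneg_right (eigenvalues_le_sq_sigmaMax A j) (sq_nonneg _)

lemma norm_toEuclideanLin_le (x : EuclideanSpace ℝ (Fin n)) :
    ‖toEuclideanLin A x‖ ≤ sigmaMax A * ‖x‖ :=
  pow_le_pow_iff_left₀ (norm_nonneg _) (mul_nonneg (sigmaMax_nonneg A) (norm_nonneg _))
    two_ne_zero |>.mp (by rw [mul_pow]; exact sq_norm_toEuclideanLin_le A x)

lemma norm_toEuclideanLin_conjTranspose_le (y : EuclideanSpace ℝ ι) :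
    ‖toEuclideanLin Aᴴ y‖ ≤ sigmaMax A * ‖y‖ := by
  set v := toEuclideanLin Aᴴ y
  have h : ‖v‖ ^ 2 ≤ sigmaMax A * ‖y‖ * ‖v‖ :=
    calc ‖v‖ ^ 2 = ⟪toEuclideanLin A v, y⟫ := by
          rw [← real_inner_self_eq_norm_sq]
          change ⟪v, toEuclideanLin Aᴴ y⟫ = _
          rw [toEuclideanLin_conjTranspose_eq_adjoint, LinearMap.adjoint_inner_right]
      _ ≤ ‖toEuclideanLin A v‖ * ‖y‖ := real_inner_le_norm _ _
      _ ≤ sigmaMax A * ‖v‖ * ‖y‖ := by gcongr; exact norm_toEuclideanLin_le A v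
      _ = sigmaMax A * ‖y‖ * ‖v‖ := by ring
  rcases (norm_nonneg v).eq_or_lt with hv | hv
  · rw [← hv]; exact mul_nonneg (sigmaMax_nonneg A) (norm_nonneg y)
  · nlinarith

end SingularValues

lemma tangential_cone_quadratic_bound {η α r a : ℝ} (hη : 0 ≤ η) (hα0 : 0 ≤ α)
    (hα : α ≤ 2 * (1 - η)) (h : |r - a| ≤ η * |r|) :
    (2 * (1 - η) * α - α ^ 2) * a ^ 2 ≤ (1 + η ^ 2) * (2 * α * (r * a) - α ^ 2 * r ^ 2) := by
  have hφ : 0 ≤ 2 * (1 - η) * α - α ^ 2 := by nlinarith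
  have hsq : (r - a) ^ 2 ≤ η ^ 2 * r ^ 2 := by
    simpa only [sq_abs, mul_pow] using pow_le_pow_left₀ (abs_nonneg _) h 2
  have habs : |r * (r - a)| ≤ η * r ^ 2 := by
    rw [abs_mul, ← sq_abs r]
    nlinarith [abs_nonneg r]
  obtain ⟨hlo, hhi⟩ := abs_le.mp habs
  -- with `d = r - a` and `φ = 2(1 - η)α - α²`, the difference of the two sides is
  -- `φ (η² r² - d²) + α ((η r² + r d)(2 - 2η - α) + (η r² - r d)(2η² + 2η + α))`
  nlinarith [mul_nonneg hφ (sub_nonneg.2 hsq),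
    mul_nonneg hα0 (mul_nonneg (neg_le_iff_add_nonneg.mp hlo) (by linarith : 0 ≤ 2 - 2 * η - α)),
    mul_nonneg hα0 (mul_nonneg (sub_nonneg.2 hhi) (by positivity : 0 ≤ 2 * η ^ 2 + 2 * η + α))]

lemma tangential_cone_sum_bound {ι : Type*} [Fintype ι] {η α : ℝ} (hη : 0 ≤ η) (hα0 : 0 ≤ α)
    (hα : α ≤ 2 * (1 - η)) (r a : EuclideanSpace ℝ ι) (h : ∀ i, |r i - a i| ≤ η * |r i|) :
    (2 * (1 - η) * α - α ^ 2) * ‖a‖ ^ 2 ≤ (1 + η ^ 2) * (2 * α * ⟪r, a⟫ - α ^ 2 * ‖r‖ ^ 2) := by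
  simp only [EuclideanSpace.real_norm_sq_eq, PiLp.inner_apply, RCLike.inner_apply, conj_trivial,
    Finset.mul_sum, ← Finset.sum_sub_distrib]
  refine Finset.sum_le_sum fun i _ => ?_
  have := tangential_cone_quadratic_bound hη hα0 hα (h i)
  linarith

theorem kaczmarz_step_sq_norm_le {ι : Type*} [Fintype ι] [DecidableEq ι] {n : ℕ}
    (J : Matrix ι (Fin n) ℝ) {η α : ℝ} (hη : 0 ≤ η) (hα0 : 0 ≤ α) (hα : α ≤ 2 * (1 - η))
    (e : EuclideanSpace ℝ (Fin n)) (r : EuclideanSpace ℝ ι)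
    (hcone : ∀ i, |r i - toEuclideanLin J e i| ≤ η * |r i|) :
    ‖e - (α / sigmaMax J ^ 2) • toEuclideanLin Jᴴ r‖ ^ 2
      ≤ (1 - (2 * (1 - η) * α - α ^ 2) / ((1 + η ^ 2) * kappaF J ^ 2)) * ‖e‖ ^ 2 := by
  set φ := 2 * (1 - η) * α - α ^ 2
  set a := toEuclideanLin J e
  have hφ : 0 ≤ φ := by nlinarith
  rcases (sigmaMax_nonneg J).eq_or_lt with hs | hs
  -- the step vanishes, and so does `κ_F J = ‖J‖_F / 0`
  · have hmin : sigmaMin J = 0 := le_antisymm (hs ▸ sigmaMin_le_sigmaMax J) (sigmaMin_nonneg J)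
    simp [kappaF, hmin, ← hs]
  have hgain :
      φ * sigmaMin J ^ 2 * ‖e‖ ^ 2 / (1 + η ^ 2) ≤ 2 * α * ⟪r, a⟫ - α ^ 2 * ‖r‖ ^ 2 := by
    rw [div_le_iff₀' (by positivity), mul_assoc]
    exact (mul_le_mul_of_nonneg_left (sq_sigmaMin_mul_sq_norm_le J e) hφ).trans
      (tangential_cone_sum_bound hη hα0 hα r a hcone)
  have hgain_nonneg : 0 ≤ φ * sigmaMin J ^ 2 * ‖e‖ ^ 2 / (1 + η ^ 2) :=
    div_nonneg (mul_nonneg (mul_nonneg hφ (sq_nonneg _)) (sq_nonneg _)) (by positivity)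
  have hadj : ⟪e, toEuclideanLin Jᴴ r⟫ = ⟪r, a⟫ := by
    rw [toEuclideanLin_conjTranspose_eq_adjoint, LinearMap.adjoint_inner_right, real_inner_comm]
  calc ‖e - (α / sigmaMax J ^ 2) • toEuclideanLin Jᴴ r‖ ^ 2
      = ‖e‖ ^ 2 - 2 * (α / sigmaMax J ^ 2) * ⟪r, a⟫
          + (α / sigmaMax J ^ 2) ^ 2 * ‖toEuclideanLin Jᴴ r‖ ^ 2 := by
        rw [norm_sub_sq_real, real_inner_smul_right, hadj, norm_smul, mul_pow, Real.norm_eq_abs,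
          sq_abs]
        ring
    _ ≤ ‖e‖ ^ 2 - 2 * (α / sigmaMax J ^ 2) * ⟪r, a⟫
          + (α / sigmaMax J ^ 2) ^ 2 * (sigmaMax J * ‖r‖) ^ 2 := by
        gcongr
        exact norm_toEuclideanLin_conjTranspose_le J r
    _ = ‖e‖ ^ 2 - (2 * α * ⟪r, a⟫ - α ^ 2 * ‖r‖ ^ 2) / sigmaMax J ^ 2 := by
        field_simp
        ring
    _ ≤ ‖e‖ ^ 2 - φ * sigmaMin J ^ 2 * ‖e‖ ^ 2 / (1 + η ^ 2) / frobNorm J ^ 2 := by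
        gcongr ‖e‖ ^ 2 - ?_
        exact div_le_div₀ (hgain_nonneg.trans hgain) hgain (pow_pos hs 2)
          (pow_le_pow_left₀ hs.le (sigmaMax_le_frobNorm J) 2)
    _ = (1 - φ / ((1 + η ^ 2) * kappaF J ^ 2)) * ‖e‖ ^ 2 := by
        rw [kappaF, div_pow, mul_div_assoc', div_div_eq_mul_div]
        field_simp

theorem abnk_constant_stepsize_convergence_factor_general
    {n m : ℕ}
    (F : Fin m → EuclideanSpace ℝ (Fin n) → ℝ)
    (grad : Fin m → EuclideanSpace ℝ (Fin n) → EuclideanSpace ℝ (Fin n))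
    (η : ℝ) (hη0 : 0 ≤ η)
    -- local tangential cone condition with constant η
    (hltcc : ∀ i (x₁ x₂ : EuclideanSpace ℝ (Fin n)),
      |F i x₁ - F i x₂ - ∑ j, grad i x₁ j * (x₁ j - x₂ j)| ≤ η * |F i x₁ - F i x₂|)
    (xstar : EuclideanSpace ℝ (Fin n)) (hstar : ∀ i, F i xstar = 0)
    (S : Finset (Fin m))
    (xk : EuclideanSpace ℝ (Fin n))
    -- the row-submatrix F'_I(x_k) of the Jacobian
    (J : Matrix {i // i ∈ S} (Fin n) ℝ)
    (hJdef : J = Matrix.of fun (i : {i // i ∈ S}) (j : Fin n) => grad i.1 xk j)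
    (α : ℝ) (hα1 : 1 ≤ α) (hα2 : α < 2 * (1 - η))
    (xk1 : EuclideanSpace ℝ (Fin n))
    -- x_{k+1} = x_k − α (F'_I(x_k))ᵀ F_I(x_k) / ‖F'_I(x_k)‖₂²
    (hupd : xk1 = xk - (α / sigmaMax J ^ 2) • ∑ i ∈ S, F i xk • grad i xk) :
    ‖xk1 - xstar‖ ^ 2
      ≤ (1 - (2 * (1 - η) * α - α ^ 2) / ((1 + η ^ 2) * kappaF J ^ 2))
          * ‖xk - xstar‖ ^ 2 := by
  have hJ : ∀ i j, J i j = grad i.1 xk j := by simp [hJdef]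
  set r : EuclideanSpace ℝ {i // i ∈ S} := WithLp.toLp 2 fun i => F i.1 xk
  have hresidual : ∑ i ∈ S, F i xk • grad i xk = toEuclideanLin Jᴴ r := by
    ext t
    simp [r, hJ, mulVec, dotProduct, ← Finset.sum_coe_sort S, mul_comm]
  have hcone : ∀ i, |r i - toEuclideanLin J (xk - xstar) i| ≤ η * |r i| := by
    intro i
    simpa [r, hJ, hstar, mulVec, dotProduct, mul_sub] using hltcc i.1 xk xstar
  rw [hupd, hresidual, sub_right_comm]
  exact kaczmarz_step_sq_norm_le J hη0 (by linarith) hα2.le _ r hcone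

/-- Theorem 3: one step of the averaging block nonlinear Kaczmarz method
with constant stepsize `α ∈ [1, 2(1−η))` satisfies
`‖x_{k+1} − x⋆‖₂² ≤ (1 − (2(1−η)α − α²)/((1+η²) κ_F²(F'_I(x_k)))) ‖x_k − x⋆‖₂²`. -/
theorem abnk_constant_stepsize_convergence_factor
    {n m : ℕ}
    (F : Fin m → EuclideanSpace ℝ (Fin n) → ℝ)
    (grad : Fin m → EuclideanSpace ℝ (Fin n) → EuclideanSpace ℝ (Fin n))
    (η : ℝ) (hη0 : 0 ≤ η) (hη : η < 1 / 2)
    -- F is differentiable with Jacobian whose i-th row is ∇F_i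
    (hdiff : ∀ i x, HasGradientAt (F i) (grad i x) x)
    -- local tangential cone condition with constant η
    (hltcc : ∀ i (x₁ x₂ : EuclideanSpace ℝ (Fin n)),
      |F i x₁ - F i x₂ - ∑ j, grad i x₁ j * (x₁ j - x₂ j)| ≤ η * |F i x₁ - F i x₂|)
    (xstar : EuclideanSpace ℝ (Fin n)) (hstar : ∀ i, F i xstar = 0)
    (S : Finset (Fin m)) (hS : S.Nonempty)
    (xk : EuclideanSpace ℝ (Fin n))
    -- the row-submatrix F'_I(x_k) of the Jacobian
    (J : Matrix {i // i ∈ S} (Fin n) ℝ)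
    (hJdef : J = Matrix.of fun (i : {i // i ∈ S}) (j : Fin n) => grad i.1 xk j)
    -- F'_I(x_k) has full column rank
    (hrank : J.rank = n)
    (α : ℝ) (hα1 : 1 ≤ α) (hα2 : α < 2 * (1 - η))
    (xk1 : EuclideanSpace ℝ (Fin n))
    -- x_{k+1} = x_k − α (F'_I(x_k))ᵀ F_I(x_k) / ‖F'_I(x_k)‖₂²
    (hupd : xk1 = xk - (α / sigmaMax J ^ 2) • ∑ i ∈ S, F i xk • grad i xk) :
    ‖xk1 - xstar‖ ^ 2
      ≤ (1 - (2 * (1 - η) * α - α ^ 2) / ((1 + η ^ 2) * kappaF J ^ 2))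
          * ‖xk - xstar‖ ^ 2 :=
  abnk_constant_stepsize_convergence_factor_general F grad η hη0 hltcc xstar hstar S xk J hJdef α
    hα1 hα2 xk1 hupd
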